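/- arXiv:2006.04779 — 4 statements merged into one kernel-verified Lean document; each statement's English description precedes it below -/
import Mathlib

section
/- Let β be a probability distribution with full support on a finite set A, and fix a probability distribution ν on A. Over probability distributions π on A with full support, the function f(π) = Σ_a π(a)·((π(a) − ν(a))/β(a)) is minimized at π* = (ν + β)/2, and the minimum value is f(π*) = −(1/4)·Σ_a (ν(a) − β(a))²/β(a). -/
open Finset

theorem cql_inner_minimization_over_pi {A : Type*} [Fintype A] [Nonempty A]
    (β ν : A → ℝ) (hβ0 : ∀ a, 0 < β a) (hν0 : ∀ a, 0 ≤ ν a)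
    (hβ1 : ∑ a, β a = 1) (hν1 : ∑ a, ν a = 1) :
    (∀ π : A → ℝ, (∀ a, 0 < π a) → ∑ a, π a = 1 →
      ∑ a, ((ν a + β a) / 2) * (((ν a + β a) / 2 - ν a) / β a) ≤
        ∑ a, π a * ((π a - ν a) / β a)) ∧
    ∑ a, ((ν a + β a) / 2) * (((ν a + β a) / 2 - ν a) / β a) =
      -(1 / 4) * ∑ a, (ν a - β a) ^ 2 / β a := by
  constructor
  · intro π hπ hs
    have hc : ∑ a, (ν a + β a) / 2 = 1 := by
      rw [← Finset.sum_div, Finset.sum_add_distrib, hν1, hβ1]; norm_num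
    have key : ∀ a : A, π a * ((π a - ν a) / β a) -
        ((ν a + β a) / 2) * (((ν a + β a) / 2 - ν a) / β a)
        = (π a - (ν a + β a) / 2) ^ 2 / β a + (π a - (ν a + β a) / 2) := by
      intro a
      have hb := (hβ0 a).ne'
      field_simp
      ring
    have h2 : ∑ a, (π a * ((π a - ν a) / β a) -
        ((ν a + β a) / 2) * (((ν a + β a) / 2 - ν a) / β a)) =
        (∑ a, (π a - (ν a + β a) / 2) ^ 2 / β a) +
          ((∑ a, π a) - ∑ a, (ν a + β a) / 2) := by
      simp_rw [key]
      rw [Finset.sum_add_distrib, Finset.sum_sub_distrib]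
    rw [Finset.sum_sub_distrib] at h2
    have h3 : 0 ≤ ∑ a, (π a - (ν a + β a) / 2) ^ 2 / β a :=
      Finset.sum_nonneg fun a _ => div_nonneg (sq_nonneg _) (hβ0 a).le
    linarith
  · have key : ∀ a : A, ((ν a + β a) / 2) * (((ν a + β a) / 2 - ν a) / β a)
        = -(1 / 4) * ((ν a - β a) ^ 2 / β a) + (β a - ν a) / 2 := by
      intro a
      have hb := (hβ0 a).ne'
      field_simp
      ring
    rw [Finset.mul_sum]
    simp_rw [key]
    rw [Finset.sum_add_distrib]
    have h0 : ∑ a, (β a - ν a) / 2 = 0 := by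
      rw [← Finset.sum_div, Finset.sum_sub_distrib, hβ1, hν1]; norm_num
    rw [h0, add_zero]
end

section
/- In the setting of a finite MDP with penalized policy evaluation Q̂ = (I − γP^π)⁻¹(r − α·μ/β + e), where μ, β : S×A → ℝ with β > 0 and μ ≥ 0, μ(s,a) > 0 for some (s,a), α > 0, and e : S×A → ℝ with 0 ≤ e(s,a) ≤ E for all (s,a): if α·min_{s,a} μ(s,a)/β(s,a) ≥ E, then Q̂(s,a) ≤ Q^π(s,a) := [(I − γP^π)⁻¹ r](s,a) for all (s,a). -/
open Matrix Finset
open scoped NNReal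

attribute [local instance] Matrix.linftyOpNormedRing Matrix.linftyOpNormedSpace

theorem cql_lower_bound_with_sampling_error
    {SA : Type*} [Fintype SA] [Nonempty SA] [DecidableEq SA]
    (P : Matrix SA SA ℝ) (hP0 : ∀ x y, 0 ≤ P x y) (hP1 : ∀ x, ∑ y, P x y = 1)
    (γ : ℝ) (hγ0 : 0 < γ) (hγ1 : γ < 1)
    (r μ β e : SA → ℝ) (hβ : ∀ x, 0 < β x) (hμ0 : ∀ x, 0 ≤ μ x)
    (hμpos : ∃ x, 0 < μ x)
    (α : ℝ) (hα : 0 < α) (E : ℝ) (he : ∀ x, 0 ≤ e x ∧ e x ≤ E)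
    (hαE : E ≤ α * Finset.univ.inf' Finset.univ_nonempty (fun x => μ x / β x)) :
    ∀ x, ((1 - γ • P)⁻¹ *ᵥ (r - α • (fun y => μ y / β y) + e)) x ≤
        ((1 - γ • P)⁻¹ *ᵥ r) x := by
  have : CompleteSpace (Matrix SA SA ℝ) := FiniteDimensional.complete ℝ _
  -- norm bound
  have hPnorm : ‖P‖ ≤ 1 := by
    rw [Matrix.linfty_opNorm_def]
    have : ∀ i, (∑ j, (‖P i j‖₊ : ℝ≥0)) ≤ 1 := by
      intro i
      have : ((∑ j, (‖P i j‖₊ : ℝ≥0)) : ℝ) = 1 := by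
        push_cast
        rw [← hP1 i]
        exact Finset.sum_congr rfl fun j _ => abs_of_nonneg (hP0 i j)
      exact le_of_eq (by exact_mod_cast this)
    exact_mod_cast Finset.sup_le fun i _ => this i
  have hnorm : ‖γ • P‖ < 1 := by
    have : ‖γ • P‖ = |γ| * ‖P‖ := norm_smul γ P
    rw [this, abs_of_pos hγ0]
    calc γ * ‖P‖ ≤ γ * 1 := by
          exact mul_le_mul_of_nonneg_left hPnorm hγ0.le
      _ < 1 := by linarith
  -- Neumann series
  set B : Matrix SA SA ℝ := ∑' n : ℕ, (γ • P) ^ n with hB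
  have hBinv : (1 - γ • P)⁻¹ = B := by
    apply Matrix.inv_eq_left_inv
    exact geom_series_mul_neg _ hnorm
  have hsum : Summable (fun n : ℕ => (γ • P) ^ n) :=
    summable_geometric_of_norm_lt_one hnorm
  -- entrywise nonnegativity of powers
  have hpow : ∀ (n : ℕ) (x y : SA), 0 ≤ ((γ • P) ^ n) x y := by
    intro n
    induction n with
    | zero =>
      intro x y
      by_cases h : x = y <;> simp [pow_zero, Matrix.one_apply, h]
    | succ n ih =>
      intro x y
      rw [pow_succ, Matrix.mul_apply]
      exact Finset.sum_nonneg fun j _ =>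
        mul_nonneg (ih x j) (smul_nonneg hγ0.le (hP0 j y))
  -- entrywise nonnegativity of B
  have hBnn : ∀ x y, 0 ≤ B x y := by
    intro x y
    have h1 : B x = ∑' n : ℕ, ((γ • P) ^ n) x :=
      tsum_apply hsum
    have h2 : Summable (fun n : ℕ => ((γ • P) ^ n) x) := by
      exact Summable.map hsum
        (ContinuousLinearMap.proj (R := ℝ) (φ := fun _ : SA => SA → ℝ) x)
        (ContinuousLinearMap.proj (R := ℝ) (φ := fun _ : SA => SA → ℝ) x).continuous
    have h3 : B x y = ∑' n : ℕ, ((γ • P) ^ n) x y := by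
      rw [h1]; exact tsum_apply h2
    rw [h3]
    exact tsum_nonneg fun n => hpow n x y
  -- pointwise comparison of vectors
  have hvec : ∀ y, (r - α • (fun y => μ y / β y) + e) y ≤ r y := by
    intro y
    have h1 : e y ≤ α * (μ y / β y) := by
      refine (he y).2.trans (hαE.trans ?_)
      exact mul_le_mul_of_nonneg_left
        (Finset.inf'_le _ (Finset.mem_univ y)) hα.le
    simp only [Pi.add_apply, Pi.sub_apply, Pi.smul_apply, smul_eq_mul]
    linarith
  intro x
  rw [hBinv]
  simp only [Matrix.mulVec, dotProduct]
  exact Finset.sum_le_sum fun y _ =>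
    mul_le_mul_of_nonneg_left (hvec y) (hBnn x y)
end

section
/- One-step underestimation condition under policy perturbation: let β, π̂, π : A → ℝ≥0 be probability distributions on a finite set A with β strictly positive, and suppose the total variation distance satisfies Σ_a |π(a) − π̂(a)| ≤ 2ε. If Σ_a π(a)·(π(a)/β(a) − 1) ≥ ε·max_{a} π(a)/β(a), then Σ_a π̂(a)·(π(a)/β(a) − 1) ≥ 0. -/
open Finset

theorem cql_one_step_underestimation_condition {A : Type*} [Fintype A] [Nonempty A]
    (β π πhat : A → ℝ) (hβ0 : ∀ a, 0 < β a)
    (hπ0 : ∀ a, 0 ≤ π a) (hπhat0 : ∀ a, 0 ≤ πhat a)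
    (hβ1 : ∑ a, β a = 1) (hπ1 : ∑ a, π a = 1) (hπhat1 : ∑ a, πhat a = 1)
    (ε : ℝ) (hε : 0 ≤ ε)
    (htv : ∑ a, |π a - πhat a| ≤ 2 * ε)
    (hgap : ε * Finset.univ.sup' Finset.univ_nonempty (fun a => π a / β a) ≤
      ∑ a, π a * (π a / β a - 1)) :
    0 ≤ ∑ a, πhat a * (π a / β a - 1) := by
  set M := Finset.univ.sup' Finset.univ_nonempty (fun a => π a / β a) with hMdef
  have hgle : ∀ a, π a / β a ≤ M := fun a => Finset.le_sup' (fun a => π a / β a) (Finset.mem_univ a)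
  obtain ⟨a0⟩ := (inferInstance : Nonempty A)
  have hM0 : 0 ≤ M := le_trans (div_nonneg (hπ0 a0) (hβ0 a0).le) (hgle a0)
  have key : ∀ a, π a * (π a / β a) - M * ((|π a - πhat a| + (π a - πhat a)) / 2)
      ≤ πhat a * (π a / β a) := by
    intro a
    have hg0 : 0 ≤ π a / β a := div_nonneg (hπ0 a) (hβ0 a).le
    rcases le_or_gt (π a) (πhat a) with h | h
    · have habs : |π a - πhat a| = -(π a - πhat a) := abs_of_nonpos (by linarith)
      rw [habs]
      nlinarith [mul_nonneg (sub_nonneg.2 h) hg0]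
    · have habs : |π a - πhat a| = π a - πhat a := abs_of_pos (by linarith)
      rw [habs]
      nlinarith [mul_le_mul_of_nonneg_left (hgle a) (sub_nonneg.2 h.le)]
  have h1 : ∑ a, (π a * (π a / β a) - M * ((|π a - πhat a| + (π a - πhat a)) / 2))
      ≤ ∑ a, πhat a * (π a / β a) := Finset.sum_le_sum fun a _ => key a
  have h2 : ∑ a, (π a - πhat a) = 0 := by
    rw [Finset.sum_sub_distrib, hπ1, hπhat1]; ring
  have hsplit : ∑ a, (π a * (π a / β a) - M * ((|π a - πhat a| + (π a - πhat a)) / 2))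
      = ∑ a, π a * (π a / β a)
        - M * ((∑ a, |π a - πhat a|) / 2 + (∑ a, (π a - πhat a)) / 2) := by
    rw [Finset.sum_sub_distrib, ← Finset.mul_sum]
    congr 1
    congr 1
    rw [← Finset.sum_div, Finset.sum_add_distrib]
    ring
  rw [hsplit, h2] at h1
  have hbound : M * ((∑ a, |π a - πhat a|) / 2 + 0 / 2) ≤ M * ε :=
    mul_le_mul_of_nonneg_left (by linarith) hM0
  have e1 : ∑ a, πhat a * (π a / β a - 1) = (∑ a, πhat a * (π a / β a)) - 1 := by
    simp [mul_sub, Finset.sum_sub_distrib, hπhat1]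
  have e2 : ∑ a, π a * (π a / β a - 1) = (∑ a, π a * (π a / β a)) - 1 := by
    simp [mul_sub, Finset.sum_sub_distrib, hπ1]
  rw [e2] at hgap
  rw [e1]
  nlinarith
end

section
/- State-marginal perturbation bound: let P and P̂ be row-stochastic matrices on a finite set S, γ ∈ (0,1), ρ a probability vector, and define d = (1−γ)(I − γPᵀ)⁻¹ρ and d̂ = (1−γ)(I − γP̂ᵀ)⁻¹ρ (the discounted state-occupancy measures). Then d − d̂ = γ(I − γPᵀ)⁻¹(Pᵀ − P̂ᵀ)d̂, and consequently ‖d − d̂‖₁ ≤ (γ/(1−γ))·max_s ‖P(s,·) − P̂(s,·)‖₁. -/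
open Matrix Finset

lemma aux_l1_contr {S : Type*} [Fintype S]
    (P : Matrix S S ℝ) (hP0 : ∀ s s', 0 ≤ P s s') (hP1 : ∀ s, ∑ s', P s s' = 1)
    (y : S → ℝ) : ∑ s, |(Pᵀ *ᵥ y) s| ≤ ∑ s, |y s| := by
  have h1 : ∀ s, |(Pᵀ *ᵥ y) s| ≤ ∑ s', P s' s * |y s'| := by
    intro s
    calc |(Pᵀ *ᵥ y) s| = |∑ s', P s' s * y s'| := by
          simp [Matrix.mulVec, Matrix.transpose, dotProduct]
      _ ≤ ∑ s', |P s' s * y s'| := Finset.abs_sum_le_sum_abs _ _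
      _ = ∑ s', P s' s * |y s'| := by
          refine Finset.sum_congr rfl fun s' _ => ?_
          rw [abs_mul, abs_of_nonneg (hP0 s' s)]
  calc ∑ s, |(Pᵀ *ᵥ y) s| ≤ ∑ s, ∑ s', P s' s * |y s'| :=
        Finset.sum_le_sum fun s _ => h1 s
    _ = ∑ s', (∑ s, P s' s) * |y s'| := by
        rw [Finset.sum_comm]
        exact Finset.sum_congr rfl fun s' _ => by rw [Finset.sum_mul]
    _ = ∑ s, |y s| := by simp [hP1]

lemma aux_isunit {S : Type*} [Fintype S] [DecidableEq S]
    (P : Matrix S S ℝ) (hP0 : ∀ s s', 0 ≤ P s s') (hP1 : ∀ s, ∑ s', P s s' = 1)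
    (γ : ℝ) (hγ0 : 0 < γ) (hγ1 : γ < 1) :
    IsUnit (1 - γ • Pᵀ : Matrix S S ℝ).det := by
  rw [isUnit_iff_ne_zero]
  intro hdet
  obtain ⟨x, hx0, hx⟩ := (Matrix.exists_mulVec_eq_zero_iff).2 hdet
  have hxeq : x = γ • (Pᵀ *ᵥ x) := by
    have h : (1 - γ • Pᵀ) *ᵥ x = x - γ • (Pᵀ *ᵥ x) := by
      rw [Matrix.sub_mulVec, Matrix.one_mulVec, Matrix.smul_mulVec]
    rw [h] at hx
    exact sub_eq_zero.mp hx
  have hsum : ∑ s, |x s| ≤ γ * ∑ s, |x s| := by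
    calc ∑ s, |x s| = ∑ s, γ * |(Pᵀ *ᵥ x) s| := by
          refine Finset.sum_congr rfl fun s _ => ?_
          have hxs := congrFun hxeq s
          rw [hxs, Pi.smul_apply, smul_eq_mul, abs_mul, abs_of_pos hγ0]
      _ = γ * ∑ s, |(Pᵀ *ᵥ x) s| := by rw [Finset.mul_sum]
      _ ≤ γ * ∑ s, |x s| := by
          have := aux_l1_contr P hP0 hP1 x
          nlinarith
  have hnn : 0 ≤ ∑ s, |x s| := Finset.sum_nonneg fun s _ => abs_nonneg _
  have hz : ∑ s, |x s| = 0 := by nlinarith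
  apply hx0
  funext s
  have := (Finset.sum_eq_zero_iff_of_nonneg (fun s _ => abs_nonneg (x s))).mp hz s (Finset.mem_univ s)
  simpa [abs_eq_zero] using this

lemma aux_resolvent_bound {S : Type*} [Fintype S] [DecidableEq S]
    (P : Matrix S S ℝ) (hP0 : ∀ s s', 0 ≤ P s s') (hP1 : ∀ s, ∑ s', P s s' = 1)
    (γ : ℝ) (hγ0 : 0 < γ) (hγ1 : γ < 1) (v : S → ℝ) :
    (1 - γ) * ∑ s, |((1 - γ • Pᵀ)⁻¹ *ᵥ v) s| ≤ ∑ s, |v s| := by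
  set y := (1 - γ • Pᵀ)⁻¹ *ᵥ v with hy
  have hu := aux_isunit P hP0 hP1 γ hγ0 hγ1
  have hAv : (1 - γ • Pᵀ) *ᵥ y = v := by
    rw [hy, Matrix.mulVec_mulVec, Matrix.mul_nonsing_inv _ hu, Matrix.one_mulVec]
  have hveq : v = y - γ • (Pᵀ *ᵥ y) := by
    rw [← hAv, Matrix.sub_mulVec, Matrix.one_mulVec, Matrix.smul_mulVec]
  have h1 : ∑ s, |y s| - γ * ∑ s, |(Pᵀ *ᵥ y) s| ≤ ∑ s, |v s| := by
    have : ∀ s, |y s| - γ * |(Pᵀ *ᵥ y) s| ≤ |v s| := by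
      intro s
      have hv : v s = y s - γ * (Pᵀ *ᵥ y) s := by rw [hveq]; simp
      rw [hv]
      have := abs_sub_abs_le_abs_sub (y s) (γ * (Pᵀ *ᵥ y) s)
      have habs : |γ * (Pᵀ *ᵥ y) s| = γ * |(Pᵀ *ᵥ y) s| := by
        rw [abs_mul, abs_of_pos hγ0]
      linarith
    calc ∑ s, |y s| - γ * ∑ s, |(Pᵀ *ᵥ y) s|
        = ∑ s, (|y s| - γ * |(Pᵀ *ᵥ y) s|) := by
          rw [Finset.sum_sub_distrib, Finset.mul_sum]
      _ ≤ ∑ s, |v s| := Finset.sum_le_sum fun s _ => this s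
  have h2 := aux_l1_contr P hP0 hP1 y
  nlinarith


theorem state_marginal_perturbation_bound
    {S : Type*} [Fintype S] [Nonempty S] [DecidableEq S]
    (P Phat : Matrix S S ℝ)
    (hP0 : ∀ s s', 0 ≤ P s s') (hP1 : ∀ s, ∑ s', P s s' = 1)
    (hPhat0 : ∀ s s', 0 ≤ Phat s s') (hPhat1 : ∀ s, ∑ s', Phat s s' = 1)
    (γ : ℝ) (hγ0 : 0 < γ) (hγ1 : γ < 1)
    (ρ : S → ℝ) (hρ0 : ∀ s, 0 ≤ ρ s) (hρ1 : ∑ s, ρ s = 1) :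
    ((1 - γ) • ((1 - γ • Pᵀ)⁻¹ *ᵥ ρ) - (1 - γ) • ((1 - γ • Phatᵀ)⁻¹ *ᵥ ρ)
        = γ • ((1 - γ • Pᵀ)⁻¹ *ᵥ ((Pᵀ - Phatᵀ) *ᵥ
            ((1 - γ) • ((1 - γ • Phatᵀ)⁻¹ *ᵥ ρ))))) ∧
    ∑ s, |((1 - γ) • ((1 - γ • Pᵀ)⁻¹ *ᵥ ρ)) s -
          ((1 - γ) • ((1 - γ • Phatᵀ)⁻¹ *ᵥ ρ)) s| ≤
      γ / (1 - γ) *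
        Finset.univ.sup' Finset.univ_nonempty (fun s => ∑ s', |P s s' - Phat s s'|) := by
  set A : Matrix S S ℝ := 1 - γ • Pᵀ with hA
  set B : Matrix S S ℝ := 1 - γ • Phatᵀ with hB
  have huA := aux_isunit P hP0 hP1 γ hγ0 hγ1
  have huB := aux_isunit Phat hPhat0 hPhat1 γ hγ0 hγ1
  have hA2 : A⁻¹ * A = 1 := Matrix.nonsing_inv_mul _ huA
  have hB3 : B * B⁻¹ = 1 := Matrix.mul_nonsing_inv _ huB
  have hBA : B - A = γ • (Pᵀ - Phatᵀ) := by
    rw [hA, hB, smul_sub]; abel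
  have key : A⁻¹ - B⁻¹ = A⁻¹ * (γ • (Pᵀ - Phatᵀ)) * B⁻¹ := by
    rw [← hBA]
    have h : A⁻¹ * (B - A) * B⁻¹ = A⁻¹ * B * B⁻¹ - A⁻¹ * A * B⁻¹ := by
      rw [Matrix.mul_sub, Matrix.sub_mul]
    rw [h, mul_assoc, hB3, mul_one, hA2, Matrix.one_mul]
  have hident : (1 - γ) • (A⁻¹ *ᵥ ρ) - (1 - γ) • (B⁻¹ *ᵥ ρ)
      = γ • (A⁻¹ *ᵥ ((Pᵀ - Phatᵀ) *ᵥ ((1 - γ) • (B⁻¹ *ᵥ ρ)))) := by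
    rw [← smul_sub, ← Matrix.sub_mulVec, key]
    rw [Matrix.mulVec_smul, Matrix.mulVec_smul, Matrix.mulVec_mulVec,
      Matrix.mulVec_mulVec, smul_smul, mul_smul_comm, smul_mul_assoc,
      Matrix.smul_mulVec, smul_smul, mul_comm (1 - γ) γ]
  refine ⟨hident, ?_⟩
  -- bound part
  set M := Finset.univ.sup' Finset.univ_nonempty (fun s => ∑ s', |P s s' - Phat s s'|) with hM
  set dhat : S → ℝ := (1 - γ) • (B⁻¹ *ᵥ ρ) with hdhat
  set v : S → ℝ := (Pᵀ - Phatᵀ) *ᵥ dhat with hv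
  have h1γ : (0:ℝ) < 1 - γ := by linarith
  -- ‖dhat‖₁ ≤ 1
  have hdhat1 : ∑ s, |dhat s| ≤ 1 := by
    have hr := aux_resolvent_bound Phat hPhat0 hPhat1 γ hγ0 hγ1 ρ
    have hρabs : ∑ s, |ρ s| = 1 := by
      rw [← hρ1]; exact Finset.sum_congr rfl fun s _ => abs_of_nonneg (hρ0 s)
    have : ∑ s, |dhat s| = (1 - γ) * ∑ s, |(B⁻¹ *ᵥ ρ) s| := by
      rw [Finset.mul_sum]
      refine Finset.sum_congr rfl fun s _ => ?_
      rw [hdhat, Pi.smul_apply, smul_eq_mul, abs_mul, abs_of_pos h1γ]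
    rw [this]; rw [hρabs] at hr; exact hr
  -- ‖v‖₁ ≤ M
  have hM0 : ∀ s', ∑ s, |P s' s - Phat s' s| ≤ M :=
    fun s' => Finset.le_sup' (f := fun s => ∑ s', |P s s' - Phat s s'|) (Finset.mem_univ s')
  have hMnn : 0 ≤ M := le_trans (Finset.sum_nonneg fun s _ => abs_nonneg _)
    (hM0 (Classical.arbitrary S))
  have hv1 : ∑ s, |v s| ≤ M := by
    have step : ∀ s, |v s| ≤ ∑ s', |P s' s - Phat s' s| * |dhat s'| := by
      intro s
      calc |v s| = |∑ s', (P s' s - Phat s' s) * dhat s'| := by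
            rw [hv]
            simp [Matrix.mulVec, dotProduct, Matrix.sub_apply, Matrix.transpose_apply,
              sub_mul]
        _ ≤ ∑ s', |(P s' s - Phat s' s) * dhat s'| := Finset.abs_sum_le_sum_abs _ _
        _ = ∑ s', |P s' s - Phat s' s| * |dhat s'| := by
            exact Finset.sum_congr rfl fun s' _ => abs_mul _ _
    calc ∑ s, |v s| ≤ ∑ s, ∑ s', |P s' s - Phat s' s| * |dhat s'| :=
          Finset.sum_le_sum fun s _ => step s
      _ = ∑ s', (∑ s, |P s' s - Phat s' s|) * |dhat s'| := by
          rw [Finset.sum_comm]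
          exact Finset.sum_congr rfl fun s' _ => (Finset.sum_mul _ _ _).symm
      _ ≤ ∑ s', M * |dhat s'| :=
          Finset.sum_le_sum fun s' _ =>
            mul_le_mul_of_nonneg_right (hM0 s') (abs_nonneg _)
      _ = M * ∑ s', |dhat s'| := by rw [Finset.mul_sum]
      _ ≤ M * 1 := mul_le_mul_of_nonneg_left hdhat1 hMnn
      _ = M := mul_one M
  -- assemble
  have hrA := aux_resolvent_bound P hP0 hP1 γ hγ0 hγ1 v
  have hLHS : ∑ s, |((1 - γ) • (A⁻¹ *ᵥ ρ)) s - ((1 - γ) • (B⁻¹ *ᵥ ρ)) s|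
      = γ * ∑ s, |(A⁻¹ *ᵥ v) s| := by
    rw [Finset.mul_sum]
    refine Finset.sum_congr rfl fun s _ => ?_
    have := congrFun hident s
    simp only [Pi.sub_apply] at this
    rw [this, Pi.smul_apply, smul_eq_mul, abs_mul, abs_of_pos hγ0]
  rw [hLHS, div_mul_eq_mul_div]
  have h2 : ∑ s, |(A⁻¹ *ᵥ v) s| ≤ M / (1 - γ) := by
    rw [le_div_iff₀ h1γ, mul_comm]
    exact le_trans hrA hv1
  calc γ * ∑ s, |(A⁻¹ *ᵥ v) s| ≤ γ * (M / (1 - γ)) :=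
        mul_le_mul_of_nonneg_left h2 (le_of_lt hγ0)
    _ = γ * M / (1 - γ) := by ring
end
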